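/- arXiv:1111.3828 — 3 statements merged into one kernel-verified Lean document; each statement's English description precedes it below -/
import Mathlib

section
/- The image l(O_K^{*,+}) of the totally positive units under the logarithmic embedding l is a full lattice in the hyperplane L = {x ∈ ℝ^{s+t} : Σ_{i=1}^{s+t} x_i = 0}: it is a discrete subgroup of ℝ^{s+t} contained in L whose ℝ-linear span is all of L (equivalently, it is a free abelian group of rank s+t−1 spanning L). -/
/-!
Setting: `K` is a number field with exactly `s ≥ 1` real embeddings
`σr 0, …, σr (s-1) : K →+* ℝ` and `2t ≥ 2` complex (non-real) embeddings, of which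
`σc 0, …, σc (t-1) : K →+* ℂ` are pairwise non-conjugate representatives.
-/

noncomputable section
open NumberField

/-- The subgroup `O_K^{*,+}` of totally positive units: units `u` of the ring of integers
with `σᵢ(u) > 0` for every real embedding `σᵢ`, `i = 1, …, s`. -/
def posUnits (K : Type) [Field K] [NumberField K] {s : ℕ}
    (σr : Fin s → (K →+* ℝ)) : Subgroup (𝓞 K)ˣ where
  carrier := {u | ∀ i, 0 < σr i ((u : 𝓞 K) : K)}
  mul_mem' := by
    intro a b ha hb i
    push_cast [map_mul]
    exact mul_pos (ha i) (hb i)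
  one_mem' := by intro i; simp
  inv_mem' := by
    intro a ha i
    have h1 : σr i ((↑(a⁻¹ * a) : 𝓞 K) : K) = 1 := by simp
    have h2 : σr i ((↑(a⁻¹) : 𝓞 K) : K) * σr i ((↑a : 𝓞 K) : K) = 1 := by
      rw [← h1]; push_cast [map_mul]; ring
    nlinarith [ha i, h2]

/-- A subset of `ℝⁿ` is a lattice if it is discrete and its `ℝ`-linear span is all of `ℝⁿ`. -/
def IsLatticeSet {n : ℕ} (S : Set (Fin n → ℝ)) : Prop :=
  DiscreteTopology S ∧ Submodule.span ℝ S = ⊤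

/-- The projection of the logarithmic embedding `l` to the first `s` coordinates:
`u ↦ (log |σ₁(u)|, …, log |σ_s(u)|)`. -/
def projLog {K : Type} [Field K] [NumberField K] {s : ℕ}
    (σr : Fin s → (K →+* ℝ)) (u : (𝓞 K)ˣ) : Fin s → ℝ :=
  fun i => Real.log |σr i ((u : 𝓞 K) : K)|

/-- The logarithmic embedding
`l(u) = (log|σ₁(u)|, …, log|σ_s(u)|, 2 log|σ_{s+1}(u)|, …, 2 log|σ_{s+t}(u)|)`. -/
def logEmb {K : Type} [Field K] [NumberField K] {s t : ℕ}
    (σr : Fin s → (K →+* ℝ)) (σc : Fin t → (K →+* ℂ)) (u : (𝓞 K)ˣ) :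
    Fin (s + t) → ℝ :=
  Fin.append (fun i => Real.log |σr i ((u : 𝓞 K) : K)|)
    (fun j => 2 * Real.log ‖σc j ((u : 𝓞 K) : K)‖)

/-- A subgroup `U ⊆ O_K^{*,+}` is admissible if it is free abelian of rank `s` and the
projection of `l(U)` to the first `s` coordinates is a lattice in `ℝˢ`. -/
def Admissible {K : Type} [Field K] [NumberField K] {s : ℕ}
    (σr : Fin s → (K →+* ℝ)) (U : Subgroup (𝓞 K)ˣ) : Prop :=
  U ≤ posUnits K σr ∧ Nonempty (U ≃* Multiplicative (Fin s → ℤ)) ∧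
    IsLatticeSet (projLog σr '' (U : Set (𝓞 K)ˣ))

/-- The affine action of a pair `(u, a) ∈ O_K^{*,+} ⋉ O_K` on `ℂˢ × ℂᵗ`
(restricting to `ℍˢ × ℂᵗ`): `(u,a)·z = (σᵢ(u) zᵢ + σᵢ(a))ᵢ`. -/
def otAct {K : Type} [Field K] [NumberField K] {s t : ℕ}
    (σr : Fin s → (K →+* ℝ)) (σc : Fin t → (K →+* ℂ))
    (g : (𝓞 K)ˣ × 𝓞 K) (z : (Fin s → ℂ) × (Fin t → ℂ)) :
    (Fin s → ℂ) × (Fin t → ℂ) :=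
  (fun i => (σr i ((g.1 : 𝓞 K) : K) : ℂ) * z.1 i + (σr i (g.2 : K) : ℂ),
   fun j => σc j ((g.1 : 𝓞 K) : K) * z.2 j + σc j (g.2 : K))

/-- The hyperplane `L = {x ∈ ℝᵐ : ∑ xᵢ = 0}` as a submodule of `ℝᵐ`. -/
def sumZero (m : ℕ) : Submodule ℝ (Fin m → ℝ) where
  carrier := {x | ∑ i, x i = 0}
  add_mem' := by intro a b ha hb; simp_all [Finset.sum_add_distrib]
  zero_mem' := by simp
  smul_mem' := by intro c x hx; simp_all [← Finset.mul_sum]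

/-!
Indexing the infinite places of `K` by `σr` and `σc` turns `l(u)` into the vector
`(mult w · log w(u))_w`, whose coordinates sum to `log |N(u)| = 0`. On that hyperplane, forgetting
the coordinate of one place `w₀` is injective, and it maps `l(O_K^*)` onto Mathlib's unit lattice,
which is discrete and spans by Dirichlet's unit theorem. Since `O_K^{*,+}` contains every square,
`l(O_K^{*,+}) ⊇ 2 l(O_K^*)` spans the same space, and it is discrete as a subset of `l(O_K^*)`.
-/

theorem eq_of_sum_eq_of_forall_ne {ι M : Type*} [Fintype ι] [AddCancelCommMonoid M]
    {x y : ι → M} (i₀ : ι) (hsum : ∑ i, x i = ∑ i, y i) (h : ∀ i ≠ i₀, x i = y i) :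
    x = y := by
  classical
  have hrest : ∑ i ∈ Finset.univ.erase i₀, x i = ∑ i ∈ Finset.univ.erase i₀, y i :=
    Finset.sum_congr rfl fun i hi => h i (Finset.ne_of_mem_erase hi)
  funext i
  by_cases hi : i = i₀
  · subst hi
    rw [← Finset.add_sum_erase _ _ (Finset.mem_univ i),
      ← Finset.add_sum_erase _ _ (Finset.mem_univ i), hrest] at hsum
    exact add_right_cancel hsum
  · exact h i hi

namespace NumberField.Units

open InfinitePlace dirichletUnitTheorem

variable {K : Type*} [Field K] {m : ℕ}

def logVector (e : Fin m → InfinitePlace K) (u : (𝓞 K)ˣ) : Fin m → ℝ :=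
  fun k => (e k).mult * Real.log (e k (u : K))

theorem logVector_pow (e : Fin m → InfinitePlace K) (u : (𝓞 K)ˣ) (n : ℕ) :
    logVector e (u ^ n) = (n : ℝ) • logVector e u := by
  funext k
  simp only [logVector, Units.val_pow_eq_pow_val, map_pow, Real.log_pow, Pi.smul_apply,
    smul_eq_mul]
  ring

variable [NumberField K]

theorem logVector_mem_sumZero (e : Fin m ≃ InfinitePlace K) (u : (𝓞 K)ˣ) :
    logVector e u ∈ sumZero m :=
  (Fintype.sum_equiv e _ _ fun _ => rfl).trans (sum_mult_mul_log u)

def toLogSpace (e : Fin m ≃ InfinitePlace K) : (Fin m → ℝ) →ₗ[ℝ] logSpace K :=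
  LinearMap.funLeft ℝ ℝ fun w => e.symm w

theorem toLogSpace_logVector (e : Fin m ≃ InfinitePlace K) (u : (𝓞 K)ˣ) :
    toLogSpace e (logVector e u) = logEmbedding K (Additive.ofMul u) := by
  funext w
  simp [toLogSpace, logVector, LinearMap.funLeft_apply]

theorem injOn_toLogSpace (e : Fin m ≃ InfinitePlace K) :
    Set.InjOn (toLogSpace e) (sumZero m) := by
  intro x hx y hy hxy
  refine eq_of_sum_eq_of_forall_ne (e.symm w₀) (hx.trans hy.symm) fun k hk => ?_
  have hw : e k ≠ w₀ := fun h => hk (by rw [← h, e.symm_apply_apply])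
  simpa [toLogSpace, LinearMap.funLeft_apply] using congr_fun hxy ⟨e k, hw⟩

theorem image_toLogSpace_range_logVector (e : Fin m ≃ InfinitePlace K) :
    toLogSpace e '' Set.range (logVector e) = unitLattice K := by
  ext x
  simp [← Set.range_comp, unitLattice, toLogSpace_logVector]

theorem range_logVector_subset_sumZero (e : Fin m ≃ InfinitePlace K) :
    Set.range (logVector e) ⊆ sumZero m :=
  Set.range_subset_iff.mpr (logVector_mem_sumZero e)

theorem discreteTopology_of_subset_range_logVector (e : Fin m ≃ InfinitePlace K)
    {S : Set (Fin m → ℝ)} (hS : S ⊆ Set.range (logVector e)) : DiscreteTopology S := by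
  have hmem : ∀ x ∈ S, toLogSpace e x ∈ unitLattice K := fun x hx => by
    rw [← SetLike.mem_coe, ← image_toLogSpace_range_logVector e]
    exact Set.mem_image_of_mem _ (hS hx)
  let f : S → unitLattice K := fun x => ⟨toLogSpace e x, hmem x x.2⟩
  refine DiscreteTopology.of_continuous_injective (f := f)
    (((toLogSpace e).continuous_of_finiteDimensional.comp continuous_subtype_val).subtype_mk _) ?_
  intro a b hab
  have hsub := hS.trans (range_logVector_subset_sumZero e)
  exact Subtype.ext (injOn_toLogSpace e (hsub a.2) (hsub b.2) (congr_arg Subtype.val hab))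

theorem span_range_logVector (e : Fin m ≃ InfinitePlace K) :
    Submodule.span ℝ (Set.range (logVector e)) = sumZero m := by
  have hle : Submodule.span ℝ (Set.range (logVector e)) ≤ sumZero m :=
    Submodule.span_le.mpr (range_logVector_subset_sumZero e)
  refine le_antisymm hle fun x hx => ?_
  have hx' : toLogSpace e x ∈ (Submodule.span ℝ (Set.range (logVector e))).map (toLogSpace e) := by
    rw [Submodule.map_span, image_toLogSpace_range_logVector, unitLattice_span_eq_top]
    trivial
  obtain ⟨y, hy, hyx⟩ := hx'
  rwa [← injOn_toLogSpace e (hle hy) hx hyx]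

theorem span_image_logVector_of_pow_mem (e : Fin m ≃ InfinitePlace K) {S : Set (𝓞 K)ˣ} {n : ℕ}
    (hn : n ≠ 0) (hS : ∀ u, u ^ n ∈ S) :
    Submodule.span ℝ (logVector e '' S) = sumZero m := by
  rw [← span_range_logVector e]
  refine le_antisymm (Submodule.span_mono (Set.image_subset_range _ _))
    (Submodule.span_le.mpr ?_)
  rintro _ ⟨u, rfl⟩
  have hu : logVector e u = (n : ℝ)⁻¹ • logVector e (u ^ n) := by
    rw [logVector_pow, smul_smul, inv_mul_cancel₀ (by exact_mod_cast hn), one_smul]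
  rw [hu]
  exact Submodule.smul_mem _ _ (Submodule.subset_span ⟨u ^ n, hS u, rfl⟩)

end NumberField.Units

open NumberField.Units

theorem sq_mem_posUnits {K : Type} [Field K] [NumberField K] {s : ℕ} (σr : Fin s → (K →+* ℝ))
    (u : (𝓞 K)ˣ) : u ^ 2 ∈ posUnits K σr := fun i => by
  have hu : σr i (u : K) ≠ 0 := (map_ne_zero (σr i)).mpr (coe_ne_zero u)
  simpa [map_pow] using sq_pos_of_ne_zero hu

theorem NumberField.ComplexEmbedding.isReal_ofRealHom_comp {K : Type*} [Field K]
    (σ : K →+* ℝ) : ComplexEmbedding.IsReal (Complex.ofRealHom.comp σ) := by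
  rw [ComplexEmbedding.isReal_iff]
  ext x
  simp

section PlaceOfIndex

open InfinitePlace ComplexEmbedding Function

variable {K : Type} [Field K] {s t : ℕ} {σr : Fin s → (K →+* ℝ)} {σc : Fin t → (K →+* ℂ)}

variable (σr σc) in
def placeOfIndex : Fin (s + t) → InfinitePlace K :=
  Fin.append (fun i => mk (Complex.ofRealHom.comp (σr i))) fun j => mk (σc j)

theorem placeOfIndex_injective (hσr : Injective σr) (hσc : Injective σc)
    (hσc_nonreal : ∀ j, ¬ IsReal (σc j)) (hσc_nonconj : ∀ j k, conjugate (σc j) ≠ σc k) :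
    Injective (placeOfIndex σr σc) := by
  refine Fin.append_injective_iff.mpr ⟨fun i i' h => hσr ?_, fun j j' h => ?_, fun i j h => ?_⟩
  · have hcomp : Complex.ofRealHom.comp (σr i) = Complex.ofRealHom.comp (σr i') := by
      rcases mk_eq_iff.mp h with h | h
      · exact h
      · rwa [isReal_iff.mp (isReal_ofRealHom_comp _)] at h
    ext x
    exact Complex.ofReal_injective (RingHom.congr_fun hcomp x)
  · exact hσc ((mk_eq_iff.mp h).resolve_right (hσc_nonconj j j'))
  · exact hσc_nonreal j (isReal_mk_iff.mp (h ▸ isReal_mk_iff.mpr (isReal_ofRealHom_comp (σr i))))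

theorem placeOfIndex_surjective (hσr : Surjective σr)
    (hσc_exh : ∀ φ : K →+* ℂ, ¬ IsReal φ → ∃ j, σc j = φ ∨ conjugate (σc j) = φ) :
    Surjective (placeOfIndex σr σc) := by
  intro w
  by_cases hw : w.IsReal
  · have hre := InfinitePlace.isReal_iff.mp hw
    obtain ⟨i, hi⟩ := hσr hre.embedding
    refine ⟨Fin.castAdd t i, ?_⟩
    have hcomp : Complex.ofRealHom.comp (σr i) = w.embedding := by
      ext x
      simp [hi]
    rw [placeOfIndex, Fin.append_left, hcomp, mk_embedding]
  · obtain ⟨j, hj⟩ := hσc_exh w.embedding fun h => hw (InfinitePlace.isReal_iff.mpr h)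
    refine ⟨Fin.natAdd s j, ?_⟩
    rw [placeOfIndex, Fin.append_right, mk_eq_iff.mpr hj, mk_embedding]

variable [NumberField K] in
theorem logEmb_eq_logVector (hσc_nonreal : ∀ j, ¬ IsReal (σc j)) :
    logEmb σr σc = logVector (placeOfIndex σr σc) := by
  funext u k
  induction k using Fin.addCases with
  | left i =>
    have hmult : (mk (Complex.ofRealHom.comp (σr i))).mult = 1 :=
      IsReal.mult_eq_one ⟨_, isReal_ofRealHom_comp (σr i), rfl⟩
    simp [logEmb, logVector, placeOfIndex, hmult, InfinitePlace.apply]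
  | right j =>
    have hmult : (mk (σc j)).mult = 2 := IsComplex.mult_eq_two ⟨_, hσc_nonreal j, rfl⟩
    simp [logEmb, logVector, placeOfIndex, hmult, InfinitePlace.apply]

end PlaceOfIndex

theorem logEmb_posUnits_isFullLattice_general
    (K : Type) [Field K] [NumberField K] (s t : ℕ)
    (σr : Fin s → (K →+* ℝ)) (hσr : Function.Bijective σr)
    (σc : Fin t → (K →+* ℂ)) (hσc : Function.Injective σc)
    (hσc_nonreal : ∀ j, ¬ ComplexEmbedding.IsReal (σc j))
    (hσc_nonconj : ∀ j k, ComplexEmbedding.conjugate (σc j) ≠ σc k)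
    (hσc_exh : ∀ φ : K →+* ℂ, ¬ ComplexEmbedding.IsReal φ →
      ∃ j, σc j = φ ∨ ComplexEmbedding.conjugate (σc j) = φ) :
    logEmb σr σc '' (posUnits K σr : Set (𝓞 K)ˣ) ⊆ (sumZero (s + t) : Set (Fin (s + t) → ℝ)) ∧
    DiscreteTopology (logEmb σr σc '' (posUnits K σr : Set (𝓞 K)ˣ)) ∧
    Submodule.span ℝ (logEmb σr σc '' (posUnits K σr : Set (𝓞 K)ˣ)) = sumZero (s + t) := by
  let e : Fin (s + t) ≃ InfinitePlace K := Equiv.ofBijective (placeOfIndex σr σc)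
    ⟨placeOfIndex_injective hσr.injective hσc hσc_nonreal hσc_nonconj,
      placeOfIndex_surjective hσr.surjective hσc_exh⟩
  have himage : logEmb σr σc '' posUnits K σr ⊆ Set.range (logVector e) := by
    rw [logEmb_eq_logVector hσc_nonreal]
    exact Set.image_subset_range _ _
  refine ⟨himage.trans (range_logVector_subset_sumZero e),
    discreteTopology_of_subset_range_logVector e himage, ?_⟩
  rw [logEmb_eq_logVector hσc_nonreal]
  exact span_image_logVector_of_pow_mem e two_ne_zero (sq_mem_posUnits σr)

/-- The image `l(O_K^{*,+})` of the totally positive units under the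
logarithmic embedding `l` is a full lattice in the hyperplane
`L = {x ∈ ℝ^{s+t} : ∑ xᵢ = 0}`: it is a discrete subgroup of `ℝ^{s+t}`
contained in `L` whose `ℝ`-linear span is all of `L`. -/
theorem logEmb_posUnits_isFullLattice
    (K : Type) [Field K] [NumberField K] (s t : ℕ) (hs : 1 ≤ s) (ht : 1 ≤ t)
    (σr : Fin s → (K →+* ℝ)) (hσr : Function.Bijective σr)
    (σc : Fin t → (K →+* ℂ)) (hσc : Function.Injective σc)
    (hσc_nonreal : ∀ j, ¬ ComplexEmbedding.IsReal (σc j))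
    (hσc_nonconj : ∀ j k, ComplexEmbedding.conjugate (σc j) ≠ σc k)
    (hσc_exh : ∀ φ : K →+* ℂ, ¬ ComplexEmbedding.IsReal φ →
      ∃ j, σc j = φ ∨ ComplexEmbedding.conjugate (σc j) = φ) :
    logEmb σr σc '' (posUnits K σr : Set (𝓞 K)ˣ) ⊆ (sumZero (s + t) : Set (Fin (s + t) → ℝ)) ∧
    DiscreteTopology (logEmb σr σc '' (posUnits K σr : Set (𝓞 K)ˣ)) ∧
    Submodule.span ℝ (logEmb σr σc '' (posUnits K σr : Set (𝓞 K)ˣ)) = sumZero (s + t) :=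
  logEmb_posUnits_isFullLattice_general K s t σr hσr σc hσc hσc_nonreal hσc_nonconj hσc_exh

end
end

section
/- Let U ⊆ O_K^{*,+} be an admissible subgroup and let Γ = U ⋉ O_K act on ℍ^s × ℂ^t by (u,a)·(z₁,…,z_{s+t}) = (σ₁(u)z₁+σ₁(a),…,σ_{s+t}(u)z_{s+t}+σ_{s+t}(a)). For any fixed (z₁,…,z_s) ∈ ℍ^s, let L = {(z₁,…,z_s)} × ℂ^t ⊆ ℍ^s × ℂ^t. Then for every γ ∈ Γ with γ ≠ 1, one has γ(L) ∩ L = ∅. -/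
/-!
Setting: `K` is a number field with exactly `s ≥ 1` real embeddings
`σr 0, …, σr (s-1) : K →+* ℝ` and `2t ≥ 2` complex (non-real) embeddings, of which
`σc 0, …, σc (t-1) : K →+* ℂ` are pairwise non-conjugate representatives.
-/

noncomputable section
open NumberField

/-!
If `γ = (u, a)` moves some point of the leaf `{z} × ℂᵗ` into the leaf, then
`σᵢ(u) zᵢ + σᵢ(a) = zᵢ` for every real embedding. Since `σᵢ(u), σᵢ(a)` are real and
`im zᵢ > 0`, comparing imaginary parts gives `σᵢ(u) = 1`, hence `σᵢ(a) = 0` and `a = 0`.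
Then `u ∈ U` lies in the kernel of `u ↦ (log |σᵢ(u)|)ᵢ`, which is injective on `U ≅ ℤˢ`
because its image spans `ℝˢ`: `s` vectors spanning an `s`-dimensional space are linearly
independent.
-/

theorem Complex.ofReal_mul_add_ofReal_eq_self_iff {z : ℂ} (hz : 0 < z.im) {r b : ℝ} :
    (r : ℂ) * z + b = z ↔ r = 1 ∧ b = 0 := by
  constructor
  · intro h
    have hr : r = 1 := by
      have him := congrArg Complex.im h
      simp only [add_im, im_ofReal_mul, ofReal_im, add_zero] at him
      exact mul_right_cancel₀ hz.ne' (him.trans (one_mul _).symm)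
    subst hr
    simpa using h
  · rintro ⟨rfl, rfl⟩
    simp

theorem AddMonoidHom.injective_of_span_range_eq_top {K V ι : Type*} [Field K] [CharZero K]
    [AddCommGroup V] [Module K V] [Fintype ι] (f : (ι → ℤ) →+ V)
    (hspan : Submodule.span K (Set.range f) = ⊤)
    (hdim : Module.finrank K V = Fintype.card ι) : Function.Injective f := by
  classical
  set v : ι → V := fun i => f (Pi.single i 1)
  have hf : ∀ y, f y = ∑ i, (y i : K) • v i := fun y => by
    conv_lhs => rw [← Finset.univ_sum_single y]
    simp only [map_sum, Int.cast_smul_eq_zsmul, v, ← map_zsmul, ← Pi.single_smul, smul_eq_mul,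
      mul_one]
  have hv : LinearIndependent K v := by
    refine linearIndependent_of_top_le_span_of_card_eq_finrank ?_ hdim.symm
    rw [← hspan, Submodule.span_le]
    rintro _ ⟨y, rfl⟩
    rw [hf]
    exact Submodule.sum_mem _ fun i _ => Submodule.smul_mem _ _ (Submodule.subset_span ⟨i, rfl⟩)
  refine (injective_iff_map_eq_zero f).2 fun y hy => funext fun i => ?_
  exact_mod_cast Fintype.linearIndependent_iff.1 hv (fun i => (y i : K)) (by rw [← hf, hy]) i

section

variable {K : Type} [Field K] [NumberField K] {s : ℕ} {σr : Fin s → (K →+* ℝ)}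

theorem projLog_mul (a b : (𝓞 K)ˣ) : projLog σr (a * b) = projLog σr a + projLog σr b := by
  funext i
  have hne : ∀ c : (𝓞 K)ˣ, |σr i ((c : 𝓞 K) : K)| ≠ 0 := fun c => by simp
  simp only [projLog, Pi.add_apply, Units.val_mul, map_mul, abs_mul,
    Real.log_mul (hne a) (hne b)]

theorem Admissible.eq_one_of_projLog_eq_zero {U : Subgroup (𝓞 K)ˣ} (hU : Admissible σr U)
    {u : (𝓞 K)ˣ} (hu : u ∈ U) (h : projLog σr u = 0) : u = 1 := by
  obtain ⟨-, ⟨e⟩, -, hspan⟩ := hU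
  let F : (Fin s → ℤ) →+ (Fin s → ℝ) :=
    AddMonoidHom.mk' (fun y => projLog σr (e.symm (.ofAdd y))) fun x y => by
      simp only [ofAdd_add, map_mul, Subgroup.coe_mul, projLog_mul]
  have hrange : Set.range F = projLog σr '' U := by
    refine Set.Subset.antisymm ?_ ?_
    · rintro _ ⟨y, rfl⟩
      exact ⟨_, (e.symm (.ofAdd y)).2, rfl⟩
    · rintro _ ⟨v, hv, rfl⟩
      exact ⟨(e ⟨v, hv⟩).toAdd, by simp [F]⟩
  have hF : Function.Injective F :=
    F.injective_of_span_range_eq_top (hrange ▸ hspan) (by simp)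
  have he : (e ⟨u, hu⟩).toAdd = 0 :=
    (injective_iff_map_eq_zero F).1 hF _ (by simpa [F] using h)
  simpa using congrArg Subtype.val (e.map_eq_one_iff.1 (toAdd_eq_zero.1 he))

end

theorem otAct_leaf_disjoint_general
    (K : Type) [Field K] [NumberField K] (s t : ℕ) (hs : 1 ≤ s)
    (σr : Fin s → (K →+* ℝ))
    (σc : Fin t → (K →+* ℂ))
    (U : Subgroup (𝓞 K)ˣ) (hU : Admissible σr U)
    (z : Fin s → ℂ) (hz : ∀ i, 0 < (z i).im)
    (u : (𝓞 K)ˣ) (hu : u ∈ U) (a : 𝓞 K) (hne : ¬ (u = 1 ∧ a = 0)) :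
    (otAct σr σc (u, a) '' {w : (Fin s → ℂ) × (Fin t → ℂ) | w.1 = z}) ∩
      {w : (Fin s → ℂ) × (Fin t → ℂ) | w.1 = z} = ∅ := by
  refine Set.eq_empty_of_forall_notMem ?_
  rintro _ ⟨⟨⟨_, w⟩, rfl, rfl⟩, hfix⟩
  have hcoord : ∀ i, σr i ((u : 𝓞 K) : K) = 1 ∧ σr i (a : K) = 0 := fun i =>
    (Complex.ofReal_mul_add_ofReal_eq_self_iff (hz i)).1 <| by
      simpa [otAct] using congrFun hfix i
  refine hne ⟨hU.eq_one_of_projLog_eq_zero hu (funext fun i => by simp [projLog, hcoord i]), ?_⟩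
  have ha : σr ⟨0, hs⟩ (a : K) = 0 := (hcoord _).2
  exact_mod_cast (map_eq_zero _).1 ha

/-- Let `U ⊆ O_K^{*,+}` be admissible and let `Γ = U ⋉ O_K` act on
`ℍˢ × ℂᵗ`. For any fixed `(z₁, …, z_s) ∈ ℍˢ`, let `L = {(z₁,…,z_s)} × ℂᵗ`. Then for
every `γ ∈ Γ` with `γ ≠ 1`, one has `γ(L) ∩ L = ∅`. -/
theorem otAct_leaf_disjoint
    (K : Type) [Field K] [NumberField K] (s t : ℕ) (hs : 1 ≤ s) (ht : 1 ≤ t)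
    (σr : Fin s → (K →+* ℝ)) (hσr : Function.Bijective σr)
    (σc : Fin t → (K →+* ℂ)) (hσc : Function.Injective σc)
    (hσc_nonreal : ∀ j, ¬ ComplexEmbedding.IsReal (σc j))
    (hσc_nonconj : ∀ j k, ComplexEmbedding.conjugate (σc j) ≠ σc k)
    (hσc_exh : ∀ φ : K →+* ℂ, ¬ ComplexEmbedding.IsReal φ →
      ∃ j, σc j = φ ∨ ComplexEmbedding.conjugate (σc j) = φ)
    (U : Subgroup (𝓞 K)ˣ) (hU : Admissible σr U)
    (z : Fin s → ℂ) (hz : ∀ i, 0 < (z i).im)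
    (u : (𝓞 K)ˣ) (hu : u ∈ U) (a : 𝓞 K) (hne : ¬ (u = 1 ∧ a = 0)) :
    (otAct σr σc (u, a) '' {w : (Fin s → ℂ) × (Fin t → ℂ) | w.1 = z}) ∩
      {w : (Fin s → ℂ) × (Fin t → ℂ) | w.1 = z} = ∅ :=
  otAct_leaf_disjoint_general K s t hs σr σc U hU z hz u hu a hne
end
end

section
/- Consider the additive action of O_K on ℍ^s × ℂ^t by translations, a·(z₁,…,z_{s+t}) = (z₁+σ₁(a),…,z_{s+t}+σ_{s+t}(a)). The quotient (ℍ^s × ℂ^t)/O_K is homeomorphic to (ℝ_{>0})^s × (ℝ/ℤ)^n, where n = s + 2t (i.e. to the trivial torus bundle over (ℝ_{>0})^s with fiber the n-dimensional torus). -/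
/-!
Setting: `K` is a number field with exactly `s ≥ 1` real embeddings
`σr 0, …, σr (s-1) : K →+* ℝ` and `2t ≥ 2` complex (non-real) embeddings, of which
`σc 0, …, σc (t-1) : K →+* ℂ` are pairwise non-conjugate representatives.
-/

noncomputable section
open NumberField

/-!
Translation by `a ∈ O_K` leaves the imaginary parts of the real-place coordinates unchanged and
moves the remaining coordinates `(Re z₁, …, Re z_s, z_{s+1}, …, z_{s+t}) ∈ ℝˢ × ℂᵗ` by
`σ(a) = (σ₁(a), …, σ_{s+t}(a))`. After matching `σr`, `σc` with the infinite places of `K`,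
`σ(O_K)` is the image of the Minkowski lattice of `K` under a real-linear isomorphism from the
mixed space, so it is the `ℤ`-span of an `ℝ`-basis of `ℝˢ × ℂᵗ`; coordinates in that basis taken
modulo `ℤ` identify `(ℝˢ × ℂᵗ)/σ(O_K)` with `(ℝ/ℤ)^(s+2t)`.
-/

namespace Topology.IsQuotientMap

variable {X Y : Type*} [TopologicalSpace X] [TopologicalSpace Y] {f : X → Y}

def quotHomeomorph (hf : IsQuotientMap f) {r : X → X → Prop}
    (hr : ∀ x y, r x y ↔ f x = f y) : Quot r ≃ₜ Y := by
  obtain rfl : r = (Setoid.ker f).r := by ext x y; exact hr x y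
  exact IsQuotientMap.homeomorph (f := ⟨f, hf.continuous⟩) hf

end Topology.IsQuotientMap

namespace Module.Basis

variable {ι E : Type*} [AddCommGroup E] [Module ℝ E]

def toAddTorus (b : Basis ι ℝ E) (v : E) : ι → AddCircle (1 : ℝ) :=
  fun i => (b.repr v i : AddCircle (1 : ℝ))

theorem toAddTorus_eq_toAddTorus_iff (b : Basis ι ℝ E) (u v : E) :
    b.toAddTorus u = b.toAddTorus v ↔ v - u ∈ Submodule.span ℤ (Set.range b) := by
  rw [b.mem_span_iff_repr_mem ℤ, funext_iff]
  refine forall_congr' fun i => ?_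
  rw [toAddTorus, toAddTorus, eq_comm, ← sub_eq_zero, ← AddCircle.coe_sub,
    AddCircle.coe_eq_zero_iff, map_sub]
  simp

theorem isOpenQuotientMap_toAddTorus [Finite ι] [TopologicalSpace E] [IsTopologicalAddGroup E]
    [ContinuousSMul ℝ E] [T2Space E] (b : Basis ι ℝ E) : IsOpenQuotientMap b.toAddTorus :=
  (IsOpenQuotientMap.piMap fun _ => QuotientAddGroup.isOpenQuotientMap_mk).comp
    b.equivFunL.toHomeomorph.isOpenQuotientMap

end Module.Basis

namespace NumberField.InfinitePlace

variable {K : Type*} [Field K]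

theorem isReal_mk_ofRealHom_comp (f : K →+* ℝ) : IsReal (mk (Complex.ofRealHom.comp f)) :=
  isReal_mk_iff.mpr <|
    ComplexEmbedding.isReal_iff.mpr (RingHom.ext fun x => Complex.conj_ofReal (f x))

theorem embedding_of_isReal_mk_ofRealHom_comp (f : K →+* ℝ) :
    embedding_of_isReal (isReal_mk_ofRealHom_comp f) = f := by
  ext x
  apply Complex.ofReal_injective
  rw [embedding_of_isReal_apply, embedding_mk_eq_of_isReal]
  · rfl
  · exact isReal_mk_iff.mp (isReal_mk_ofRealHom_comp f)

def realEmbeddingEquiv : (K →+* ℝ) ≃ {w : InfinitePlace K // IsReal w} where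
  toFun f := ⟨mk (Complex.ofRealHom.comp f), isReal_mk_ofRealHom_comp f⟩
  invFun w := embedding_of_isReal w.2
  left_inv := embedding_of_isReal_mk_ofRealHom_comp
  right_inv w := by
    ext1
    convert mk_embedding w.1
    exact RingHom.ext (embedding_of_isReal_apply w.2)

theorem exists_linearEquiv_embedding_mk (φ : K →+* ℂ) :
    ∃ τ : ℂ ≃ₗ[ℝ] ℂ, ∀ x, τ (embedding (mk φ) x) = φ x := by
  rcases embedding_mk_eq φ with h | h
  · exact ⟨LinearEquiv.refl ℝ ℂ, fun _ => by rw [h]; rfl⟩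
  · exact ⟨Complex.conjAe.toLinearEquiv, fun x => by simp [h]⟩

theorem exists_equiv_isComplex_of_embeddings {t : ℕ} {σc : Fin t → (K →+* ℂ)}
    (hσc : Function.Injective σc)
    (hσc_nonreal : ∀ j, ¬ ComplexEmbedding.IsReal (σc j))
    (hσc_nonconj : ∀ j k, ComplexEmbedding.conjugate (σc j) ≠ σc k)
    (hσc_exh : ∀ φ : K →+* ℂ, ¬ ComplexEmbedding.IsReal φ →
      ∃ j, σc j = φ ∨ ComplexEmbedding.conjugate (σc j) = φ) :
    ∃ e : Fin t ≃ {w : InfinitePlace K // IsComplex w}, ∀ j, (e j).1 = mk (σc j) := by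
  let g (j : Fin t) : {w : InfinitePlace K // IsComplex w} :=
    ⟨mk (σc j), isComplex_mk_iff.mpr (hσc_nonreal j)⟩
  have hg : Function.Bijective g := by
    refine ⟨fun j k hjk => ?_, fun w => ?_⟩
    · rcases mk_eq_iff.mp (congrArg Subtype.val hjk) with h | h
      · exact hσc h
      · exact absurd h (hσc_nonconj j k)
    · obtain ⟨j, hj⟩ := hσc_exh _ (isComplex_iff.mp w.2)
      refine ⟨j, Subtype.ext ?_⟩
      rw [← mk_embedding w.1, mk_eq_iff]
      exact hj
  exact ⟨Equiv.ofBijective g hg, fun _ => rfl⟩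

end NumberField.InfinitePlace

namespace NumberField

open InfinitePlace mixedEmbedding

variable {K : Type*} [Field K] {s t : ℕ}

def mixedEmbeddingOf (σr : Fin s → (K →+* ℝ)) (σc : Fin t → (K →+* ℂ)) :
    K →+* (Fin s → ℝ) × (Fin t → ℂ) :=
  (RingHom.pi σr).prod (RingHom.pi σc)

theorem exists_linearEquiv_mixedSpace {σr : Fin s → (K →+* ℝ)} {σc : Fin t → (K →+* ℂ)}
    (hσr : Function.Bijective σr) (hσc : Function.Injective σc)
    (hσc_nonreal : ∀ j, ¬ ComplexEmbedding.IsReal (σc j))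
    (hσc_nonconj : ∀ j k, ComplexEmbedding.conjugate (σc j) ≠ σc k)
    (hσc_exh : ∀ φ : K →+* ℂ, ¬ ComplexEmbedding.IsReal φ →
      ∃ j, σc j = φ ∨ ComplexEmbedding.conjugate (σc j) = φ) :
    ∃ Ψ : mixedSpace K ≃ₗ[ℝ] (Fin s → ℝ) × (Fin t → ℂ),
      ∀ x, Ψ (mixedEmbedding K x) = mixedEmbeddingOf σr σc x := by
  let eR := (Equiv.ofBijective σr hσr).trans realEmbeddingEquiv
  obtain ⟨eC, heC⟩ :=
    exists_equiv_isComplex_of_embeddings hσc hσc_nonreal hσc_nonconj hσc_exh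
  choose τ hτ using fun j => exists_linearEquiv_embedding_mk (σc j)
  refine ⟨(LinearEquiv.funCongrLeft ℝ ℝ eR).prodCongr
    ((LinearEquiv.funCongrLeft ℝ ℂ eC).trans (LinearEquiv.piCongrRight τ)), fun x => ?_⟩
  refine Prod.ext (funext fun i => ?_) (funext fun j => ?_)
  · show (mixedEmbedding K x).1 (eR i) = σr i x
    rw [mixedEmbedding_apply_isReal]
    exact RingHom.congr_fun (embedding_of_isReal_mk_ofRealHom_comp (σr i)) x
  · show τ j ((mixedEmbedding K x).2 (eC j)) = σc j x
    rw [mixedEmbedding_apply_isComplex, heC, hτ]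

theorem exists_basis_span_int_eq_range [NumberField K] {σr : Fin s → (K →+* ℝ)}
    {σc : Fin t → (K →+* ℂ)} (Ψ : mixedSpace K ≃ₗ[ℝ] (Fin s → ℝ) × (Fin t → ℂ))
    (hΨ : ∀ x, Ψ (mixedEmbedding K x) = mixedEmbeddingOf σr σc x) :
    ∃ b : Module.Basis (Fin (s + 2 * t)) ℝ ((Fin s → ℝ) × (Fin t → ℂ)),
      ∀ v, v ∈ Submodule.span ℤ (Set.range b) ↔ ∃ a : 𝓞 K, mixedEmbeddingOf σr σc a = v := by
  let b₀ := (latticeBasis K).map Ψ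
  have hcard : Fintype.card (Module.Free.ChooseBasisIndex ℤ (𝓞 K)) = s + 2 * t := by
    rw [← Module.finrank_eq_card_basis b₀]
    simp [Module.finrank_pi_fintype, Complex.finrank_real_complex, mul_comm]
  refine ⟨b₀.reindex (Fintype.equivFinOfCardEq hcard), fun v => ?_⟩
  have hb₀ : Set.range b₀ = (Ψ.restrictScalars ℤ).toLinearMap '' Set.range (latticeBasis K) := by
    rw [Module.Basis.coe_map, Set.range_comp]; rfl
  rw [Module.Basis.range_reindex, hb₀, ← Submodule.map_span, Submodule.mem_map]
  simp only [mem_span_latticeBasis, LinearMap.mem_range]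
  constructor
  · rintro ⟨_, ⟨a, rfl⟩, rfl⟩
    exact ⟨a, (hΨ a).symm⟩
  · rintro ⟨a, rfl⟩
    exact ⟨_, ⟨a, rfl⟩, hΨ a⟩

end NumberField

def upperHalfSpaceHomeomorph (ι Y : Type*) [TopologicalSpace Y] :
    {w : (ι → ℂ) × Y // ∀ i, 0 < (w.1 i).im} ≃ₜ (ι → {r : ℝ // 0 < r}) × ((ι → ℝ) × Y) where
  toFun w := (fun i => ⟨(w.1.1 i).im, w.2 i⟩, fun i => (w.1.1 i).re, w.1.2)
  invFun p := ⟨(fun i => ⟨p.2.1 i, p.1 i⟩, p.2.2), fun i => (p.1 i).2⟩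
  left_inv w := by ext <;> simp
  right_inv p := by ext <;> simp
  continuous_toFun := by fun_prop
  continuous_invFun := by
    have : Continuous fun x : ℝ × ℝ => (⟨x.1, x.2⟩ : ℂ) := Complex.equivRealProdCLM.symm.continuous
    fun_prop

theorem otAct_one_eq_iff {K : Type} [Field K] [NumberField K] {s t : ℕ} (σr : Fin s → (K →+* ℝ))
    (σc : Fin t → (K →+* ℂ)) (a : 𝓞 K) (z z' : (Fin s → ℂ) × (Fin t → ℂ)) :
    otAct σr σc (1, a) z = z' ↔ (∀ i, (z.1 i).im = (z'.1 i).im) ∧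
      mixedEmbeddingOf σr σc a = ((fun i => (z'.1 i).re), z'.2) - ((fun i => (z.1 i).re), z.2) := by
  simp only [Prod.ext_iff, funext_iff, Complex.ext_iff, forall_and]
  simp [otAct, mixedEmbeddingOf, eq_sub_iff_add_eq']
  tauto

theorem otQuotient_translations_homeomorph_general
    (K : Type) [Field K] [NumberField K] (s t : ℕ)
    (σr : Fin s → (K →+* ℝ)) (hσr : Function.Bijective σr)
    (σc : Fin t → (K →+* ℂ)) (hσc : Function.Injective σc)
    (hσc_nonreal : ∀ j, ¬ ComplexEmbedding.IsReal (σc j))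
    (hσc_nonconj : ∀ j k, ComplexEmbedding.conjugate (σc j) ≠ σc k)
    (hσc_exh : ∀ φ : K →+* ℂ, ¬ ComplexEmbedding.IsReal φ →
      ∃ j, σc j = φ ∨ ComplexEmbedding.conjugate (σc j) = φ) :
    Nonempty
      ((Quot fun x y : {w : (Fin s → ℂ) × (Fin t → ℂ) // ∀ i, 0 < (w.1 i).im} =>
          ∃ a : 𝓞 K, otAct σr σc (1, a) x.val = y.val) ≃ₜ
        ((Fin s → {r : ℝ // 0 < r}) × (Fin (s + 2 * t) → AddCircle (1 : ℝ)))) := by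
  obtain ⟨Ψ, hΨ⟩ := exists_linearEquiv_mixedSpace hσr hσc hσc_nonreal hσc_nonconj hσc_exh
  obtain ⟨b, hb⟩ := exists_basis_span_int_eq_range Ψ hΨ
  let e := upperHalfSpaceHomeomorph (Fin s) (Fin t → ℂ)
  have hq : IsOpenQuotientMap (Prod.map id b.toAddTorus ∘ e) :=
    (IsOpenQuotientMap.id.prodMap b.isOpenQuotientMap_toAddTorus).comp e.isOpenQuotientMap
  refine ⟨hq.isQuotientMap.quotHomeomorph fun x y => ?_⟩
  have him : (e x).1 = (e y).1 ↔ ∀ i, (x.1.1 i).im = (y.1.1 i).im := by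
    simp [e, upperHalfSpaceHomeomorph, funext_iff]
  rw [Function.comp_apply, Function.comp_apply, Prod.map_apply, Prod.map_apply, Prod.mk.injEq,
    id, id, him, b.toAddTorus_eq_toAddTorus_iff, hb]
  simp only [otAct_one_eq_iff, exists_and_left]
  rfl

/-- The quotient of `ℍˢ × ℂᵗ` by the additive action of `O_K` by
translations `a·z = (zᵢ + σᵢ(a))ᵢ` is homeomorphic to `(ℝ_{>0})ˢ × (ℝ/ℤ)ⁿ` with
`n = s + 2t` (the trivial torus bundle over `(ℝ_{>0})ˢ` with fiber the `n`-torus). -/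
theorem otQuotient_translations_homeomorph
    (K : Type) [Field K] [NumberField K] (s t : ℕ) (hs : 1 ≤ s) (ht : 1 ≤ t)
    (σr : Fin s → (K →+* ℝ)) (hσr : Function.Bijective σr)
    (σc : Fin t → (K →+* ℂ)) (hσc : Function.Injective σc)
    (hσc_nonreal : ∀ j, ¬ ComplexEmbedding.IsReal (σc j))
    (hσc_nonconj : ∀ j k, ComplexEmbedding.conjugate (σc j) ≠ σc k)
    (hσc_exh : ∀ φ : K →+* ℂ, ¬ ComplexEmbedding.IsReal φ →
      ∃ j, σc j = φ ∨ ComplexEmbedding.conjugate (σc j) = φ) :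
    Nonempty
      ((Quot fun x y : {w : (Fin s → ℂ) × (Fin t → ℂ) // ∀ i, 0 < (w.1 i).im} =>
          ∃ a : 𝓞 K, otAct σr σc (1, a) x.val = y.val) ≃ₜ
        ((Fin s → {r : ℝ // 0 < r}) × (Fin (s + 2 * t) → AddCircle (1 : ℝ)))) :=
  otQuotient_translations_homeomorph_general K s t σr hσr σc hσc hσc_nonreal hσc_nonconj hσc_exh

end
end
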